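/- arXiv:2302.07498 — 9 statements merged into one kernel-verified Lean document; each statement's English description precedes it below -/
import Mathlib

section
/- Let S be a real 4×4 symplectic matrix (i.e., S Ω Sᵀ = Ω) and let V = S Sᵀ with entries (a_{ij}). If a_{12} = a_{14} = a_{34} = 0, then a_{23} = 0. -/
/-!
Since `Ω² = -1`, the relation `S Ω Sᵀ = Ω` exhibits `-Ω Sᵀ Ω` as an inverse of `S`; hence `S` is
invertible and `Sᵀ` is symplectic as well, so `V = S Sᵀ` is a positive definite symplectic matrix:
`V Ω V = Ω`. The `(1,3)` entry of this identity reads `a₁₁ a₂₃ - a₁₂ a₁₃ + a₁₃ a₃₄ - a₁₄ a₃₃ = 0`,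
which under the hypotheses becomes `a₁₁ a₂₃ = 0`, and `a₁₁ > 0`.
-/

open Matrix

/-- The standard symplectic form of two bosonic modes. -/
def Omega : Matrix (Fin 4) (Fin 4) ℝ :=
  !![0, 1, 0, 0;
     -1, 0, 0, 0;
     0, 0, 0, 1;
     0, 0, -1, 0]

section Symplectic

variable {n R : Type*} [Fintype n] [DecidableEq n] [CommRing R] {J S : Matrix n n R}

lemma mul_neg_mul_transpose_mul_eq_one (hJ : J * J = -1) (hS : S * J * Sᵀ = J) :
    S * -(J * Sᵀ * J) = 1 := by
  calc S * -(J * Sᵀ * J) = -(S * J * Sᵀ * J) := by noncomm_ring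
    _ = 1 := by rw [hS, hJ, neg_neg]

lemma isUnit_of_mul_mul_transpose_eq (hJ : J * J = -1) (hS : S * J * Sᵀ = J) : IsUnit S :=
  IsUnit.of_mul_eq_one _ (mul_neg_mul_transpose_mul_eq_one hJ hS)

lemma transpose_mul_mul_eq_of_mul_mul_transpose_eq (hJ : J * J = -1) (hS : S * J * Sᵀ = J) :
    Sᵀ * J * S = J := by
  have hinv : -(J * Sᵀ * J) * S = 1 :=
    mul_eq_one_comm.mp (mul_neg_mul_transpose_mul_eq_one hJ hS)
  calc Sᵀ * J * S = -(J * J) * (Sᵀ * J * S) := by rw [hJ, neg_neg, one_mul]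
    _ = J * (-(J * Sᵀ * J) * S) := by noncomm_ring
    _ = J := by rw [hinv, mul_one]

lemma mul_transpose_mul_mul_mul_transpose_eq (hJ : J * J = -1) (hS : S * J * Sᵀ = J) :
    S * Sᵀ * J * (S * Sᵀ) = J := by
  calc S * Sᵀ * J * (S * Sᵀ) = S * (Sᵀ * J * S) * Sᵀ := by noncomm_ring
    _ = J := by rw [transpose_mul_mul_eq_of_mul_mul_transpose_eq hJ hS, hS]

end Symplectic

lemma Omega_mul_Omega : Omega * Omega = -1 := by
  ext i j
  fin_cases i <;> fin_cases j <;> simp [Omega, mul_apply, Fin.sum_univ_four]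

lemma mul_Omega_mul_apply_zero_two (V : Matrix (Fin 4) (Fin 4) ℝ) :
    (V * Omega * V) 0 2 = V 0 0 * V 1 2 - V 0 1 * V 0 2 + V 0 2 * V 3 2 - V 0 3 * V 2 2 := by
  simp only [Omega, mul_apply, Fin.sum_univ_four, of_apply, cons_val', cons_val_fin_one,
    cons_val_zero, cons_val_one, cons_val]
  ring

/-- If `S` is a real 4×4 symplectic matrix and `V = S Sᵀ` satisfies
`a₁₂ = a₁₄ = a₃₄ = 0`, then `a₂₃ = 0`. -/
theorem stmt_0 (S : Matrix (Fin 4) (Fin 4) ℝ) (hS : S * Omega * Sᵀ = Omega)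
    (V : Matrix (Fin 4) (Fin 4) ℝ) (hV : V = S * Sᵀ)
    (h12 : V 0 1 = 0) (h14 : V 0 3 = 0) (h34 : V 2 3 = 0) :
    V 1 2 = 0 := by
  have hsymp : V * Omega * V = Omega := by
    rw [hV]
    exact mul_transpose_mul_mul_mul_transpose_eq Omega_mul_Omega hS
  have hpos : 0 < V 0 0 := by
    have hdef : (S * Sᵀ).PosDef := PosDef.mul_conjTranspose_self S
      (vecMul_injective_of_isUnit (isUnit_of_mul_mul_transpose_eq Omega_mul_Omega hS))
    rw [hV]
    exact hdef.diag_pos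
  have h43 : V 3 2 = 0 := by
    rw [← h34, hV, ← transpose_apply (S * Sᵀ), transpose_mul, transpose_transpose]
  have hentry : V 0 0 * V 1 2 = 0 := by
    have h02 := congrFun (congrFun hsymp 0) 2
    rw [mul_Omega_mul_apply_zero_two, h12, h14, h43] at h02
    simpa [Omega] using h02
  exact (mul_eq_zero.mp hentry).resolve_left hpos.ne'
end

section
/- Let V = (a_{ij}) be a real symmetric 4×4 matrix such that the complex Hermitian matrix V + iΩ is positive semidefinite. Then a_{13}² + a_{23}² ≤ a_{33}·(a_{11} + a_{22} − 2). -/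
open Matrix
open scoped ComplexOrder

/-!
Cauchy–Schwarz for the positive semidefinite form `V + iΩ`, applied to the vector `(1, i, 0, 0)`
of the signal annihilation operator `â_s` and the unit vector `e₃` of the idler quadrature `x̂_i`.
The symplectic part of the form contributes the `-2`.
-/

namespace Matrix.PosSemidef

variable {𝕜 n : Type*} [RCLike 𝕜] [Fintype n] {M : Matrix n n 𝕜}

theorem norm_dotProduct_mulVec_sq_le (hM : M.PosSemidef) (x y : n → 𝕜) :
    ‖star x ⬝ᵥ (M *ᵥ y)‖ ^ 2 ≤
      RCLike.re (star x ⬝ᵥ (M *ᵥ x)) * RCLike.re (star y ⬝ᵥ (M *ᵥ y)) := by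
  let _ := M.toSeminormedAddCommGroup hM
  let _ := M.toInnerProductSpace hM
  have h := inner_mul_inner_self_le (𝕜 := 𝕜) x y
  rw [norm_inner_symm y x, ← sq] at h
  rwa [dotProduct_comm (star x), dotProduct_comm (star x), dotProduct_comm (star y)]

end Matrix.PosSemidef

section TwoModeForm

open Complex

variable (V : Matrix (Fin 4) (Fin 4) ℝ)

theorem re_dotProduct_twoModeForm_annihilation :
    (star ![1, I, 0, 0] ⬝ᵥ ((V.map ofReal + I • Omega.map ofReal) *ᵥ ![1, I, 0, 0])).re =
      V 0 0 + V 1 1 - 2 := by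
  simp [Omega, dotProduct, mulVec, Fin.sum_univ_four]
  ring

theorem re_dotProduct_twoModeForm_idler :
    (star ![0, 0, 1, 0] ⬝ᵥ ((V.map ofReal + I • Omega.map ofReal) *ᵥ ![0, 0, 1, 0])).re =
      V 2 2 := by
  simp [Omega, dotProduct, mulVec, Fin.sum_univ_four]

theorem norm_dotProduct_twoModeForm_annihilation_idler_sq :
    ‖star ![1, I, 0, 0] ⬝ᵥ ((V.map ofReal + I • Omega.map ofReal) *ᵥ ![0, 0, 1, 0])‖ ^ 2 =
      V 0 2 ^ 2 + V 1 2 ^ 2 := by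
  simp [Omega, dotProduct, mulVec, Fin.sum_univ_four, Complex.sq_norm, normSq_apply]
  ring

end TwoModeForm

theorem stmt_1_general (V : Matrix (Fin 4) (Fin 4) ℝ)
    (hpsd : (V.map Complex.ofReal + Complex.I • Omega.map Complex.ofReal).PosSemidef) :
    V 0 2 ^ 2 + V 1 2 ^ 2 ≤ V 2 2 * (V 0 0 + V 1 1 - 2) := by
  have h := hpsd.norm_dotProduct_mulVec_sq_le ![1, Complex.I, 0, 0] ![0, 0, 1, 0]
  rwa [norm_dotProduct_twoModeForm_annihilation_idler_sq, RCLike.re_to_complex,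
    RCLike.re_to_complex, re_dotProduct_twoModeForm_annihilation,
    re_dotProduct_twoModeForm_idler, mul_comm] at h

/-- If `V` is a real symmetric 4×4 matrix with `V + iΩ` positive semidefinite, then
`a₁₃² + a₂₃² ≤ a₃₃ (a₁₁ + a₂₂ − 2)`. -/
theorem stmt_1 (V : Matrix (Fin 4) (Fin 4) ℝ) (hsymm : V.IsSymm)
    (hpsd : (V.map Complex.ofReal + Complex.I • Omega.map Complex.ofReal).PosSemidef) :
    V 0 2 ^ 2 + V 1 2 ^ 2 ≤ V 2 2 * (V 0 0 + V 1 1 - 2) :=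
  stmt_1_general V hpsd
end

section
/- Let V = (a_{ij}) be a real symmetric 4×4 matrix with a_{33} > 0 such that the complex Hermitian matrix V + iΩ is positive semidefinite, let x_s, p_s be real numbers (the signal first-order moments), let κ > 0 and N_B ≥ 0, and define the signal mean photon number N_S := (a_{11} + a_{22} − 2)/4 + (x_s² + p_s²)/2. Then κ·[(a_{13}² + a_{23}²)/a_{33} + 2(x_s² + p_s²)] / (4·(√N_B + √(1+N_B))²) ≤ N_S·κ / (√N_B + √(1+N_B))², i.e., the infinite-idler-squeezing limit of the collective decay constant is at most the collective decay constant of the coherent state with the same signal mean photon number. -/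
open Matrix
open scoped ComplexOrder

/-! Both sides share the factor `κ / (4 (√N_B + √(1 + N_B))²)`, so the claim reduces to
`(a₁₃² + a₂₃²) / a₃₃ ≤ a₁₁ + a₂₂ - 2` (with `a_ij = V (i-1) (j-1)`). This is the uncertainty
principle `V + iΩ ≥ 0` tested on a vector which couples the annihilation direction `(1, i)`
of the signal mode to the `x`-quadrature of the idler; the `-2` comes from `iΩ`. -/

lemma quadForm_signal_idler_eq (V : Matrix (Fin 4) (Fin 4) ℝ) (hsymm : V.IsSymm) :
    let z : Fin 4 → ℂ :=
      ![(V 2 2 : ℂ), V 2 2 * Complex.I, -((V 0 2 : ℂ) + V 1 2 * Complex.I), 0]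
    star z ⬝ᵥ ((V.map Complex.ofReal + Complex.I • Omega.map Complex.ofReal) *ᵥ z) =
      ((V 2 2 * (V 2 2 * (V 0 0 + V 1 1 - 2) - (V 0 2 ^ 2 + V 1 2 ^ 2)) : ℝ) : ℂ) := by
  have h20 : V 2 0 = V 0 2 := hsymm.apply 0 2
  have h21 : V 2 1 = V 1 2 := hsymm.apply 1 2
  have h10 : V 1 0 = V 0 1 := hsymm.apply 0 1
  simp [Omega, mulVec, dotProduct, Fin.sum_univ_four, h20, h21, h10, sq, Complex.ext_iff]
  constructor <;> ring

lemma cross_sq_le_of_posSemidef (V : Matrix (Fin 4) (Fin 4) ℝ) (hsymm : V.IsSymm)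
    (h33 : 0 < V 2 2)
    (hpsd : (V.map Complex.ofReal + Complex.I • Omega.map Complex.ofReal).PosSemidef) :
    (V 0 2 ^ 2 + V 1 2 ^ 2) / V 2 2 ≤ V 0 0 + V 1 1 - 2 := by
  have hform := hpsd.dotProduct_mulVec_nonneg
    ![(V 2 2 : ℂ), V 2 2 * Complex.I, -((V 0 2 : ℂ) + V 1 2 * Complex.I), 0]
  rw [quadForm_signal_idler_eq V hsymm, Complex.zero_le_real] at hform
  rw [div_le_iff₀ h33]
  linarith [(mul_nonneg_iff_of_pos_left h33).mp hform]

theorem stmt_2_general (V : Matrix (Fin 4) (Fin 4) ℝ) (hsymm : V.IsSymm) (h33 : 0 < V 2 2)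
    (hpsd : (V.map Complex.ofReal + Complex.I • Omega.map Complex.ofReal).PosSemidef)
    (x_s p_s κ N_B N_S : ℝ) (hκ : 0 < κ)
    (hNS : N_S = (V 0 0 + V 1 1 - 2) / 4 + (x_s ^ 2 + p_s ^ 2) / 2) :
    κ * ((V 0 2 ^ 2 + V 1 2 ^ 2) / V 2 2 + 2 * (x_s ^ 2 + p_s ^ 2)) /
        (4 * (Real.sqrt N_B + Real.sqrt (1 + N_B)) ^ 2) ≤
      N_S * κ / (Real.sqrt N_B + Real.sqrt (1 + N_B)) ^ 2 := by
  have hmoments : (V 0 2 ^ 2 + V 1 2 ^ 2) / V 2 2 + 2 * (x_s ^ 2 + p_s ^ 2) ≤ 4 * N_S := by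
    linarith [cross_sq_le_of_posSemidef V hsymm h33 hpsd]
  calc κ * ((V 0 2 ^ 2 + V 1 2 ^ 2) / V 2 2 + 2 * (x_s ^ 2 + p_s ^ 2)) /
        (4 * (Real.sqrt N_B + Real.sqrt (1 + N_B)) ^ 2)
      ≤ κ * (4 * N_S) / (4 * (Real.sqrt N_B + Real.sqrt (1 + N_B)) ^ 2) := by
        gcongr
    _ = N_S * κ / (Real.sqrt N_B + Real.sqrt (1 + N_B)) ^ 2 := by
        rw [mul_left_comm, mul_div_mul_left _ _ four_ne_zero, mul_comm]

/-- The infinite-idler-squeezing limit of the collective decay constant is at most the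
collective decay constant of the coherent state with the same signal mean photon number. -/
theorem stmt_2 (V : Matrix (Fin 4) (Fin 4) ℝ) (hsymm : V.IsSymm) (h33 : 0 < V 2 2)
    (hpsd : (V.map Complex.ofReal + Complex.I • Omega.map Complex.ofReal).PosSemidef)
    (x_s p_s κ N_B N_S : ℝ) (hκ : 0 < κ) (hNB : 0 ≤ N_B)
    (hNS : N_S = (V 0 0 + V 1 1 - 2) / 4 + (x_s ^ 2 + p_s ^ 2) / 2) :
    κ * ((V 0 2 ^ 2 + V 1 2 ^ 2) / V 2 2 + 2 * (x_s ^ 2 + p_s ^ 2)) /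
        (4 * (Real.sqrt N_B + Real.sqrt (1 + N_B)) ^ 2) ≤
      N_S * κ / (Real.sqrt N_B + Real.sqrt (1 + N_B)) ^ 2 :=
  stmt_2_general V hsymm h33 hpsd x_s p_s κ N_B N_S hκ hNS
end

section
/- For real numbers α, β with |α| < 1 and |β| ≤ 1, the function (z,w) ↦ exp(α z w̄ + β z̄ w − |z|² − |w|²) is integrable on ℂ², and (1/π²)·∫_{ℂ}∫_{ℂ} exp(α z w̄ + β z̄ w − |z|² − |w|²) d²z d²w = 1/(1 − αβ). -/
open MeasureTheory Complex

open scoped ComplexConjugate Real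

/-!
Integrate first in `w`: for fixed `z` the integrand is a Gaussian in `w` with linear terms
`β z̄ w + α z w̄`, and `∫ exp (-c|w|² + a w + b w̄) = (π / c) exp (a b / c)` turns it into
`π exp (-(1 - αβ)|z|²)`; a second Gaussian integral in `z` gives `π² / (1 - αβ)`.
Integrability comes from `2|z||w| ≤ |z|² + |w|²`, which bounds the real part of the exponent by
`-(1 - (|α| + |β|)/2)(|z|² + |w|²)`.
-/

theorem integral_cexp_neg_mul_sq_norm_add_mul_add_mul_conj {c : ℂ} (hc : 0 < c.re) (a b : ℂ) :
    ∫ z : ℂ, cexp (-c * ((‖z‖ : ℝ) : ℂ) ^ 2 + a * z + b * conj z) = π / c * cexp (a * b / c) := by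
  rw [← volume_preserving_equiv_pi.symm.integral_comp
    measurableEquivPi.symm.measurableEmbedding]
  have h_sum (v : Fin 2 → ℝ) :
      -c * ((‖measurableEquivPi.symm v‖ : ℝ) : ℂ) ^ 2 + a * measurableEquivPi.symm v
          + b * conj (measurableEquivPi.symm v) =
        -c * ∑ i, (v i : ℂ) ^ 2 + ∑ i, ![a + b, (a - b) * I] i * v i := by
    -- `z = x + y I` turns `a z + b z̄` into `(a + b) x + (a - b) I y`
    simp only [measurableEquivPi_symm_apply, Fin.sum_univ_two, Matrix.cons_val_zero,
      Matrix.cons_val_one, map_add, map_mul, conj_ofReal, conj_I]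
    rw [← ofReal_pow, Complex.sq_norm, normSq_add_mul_I]
    push_cast
    ring
  have h_coeff : ((a + b) ^ 2 + ((a - b) * I) ^ 2) / (4 * c) = a * b / c := by
    rw [mul_pow, I_sq]
    field_simp
    ring
  simp_rw [h_sum]
  rw [GaussianFourier.integral_cexp_neg_mul_sum_add hc]
  simp only [Fin.sum_univ_two, Matrix.cons_val_zero, Matrix.cons_val_one, Fintype.card_fin]
  rw [h_coeff, Nat.cast_ofNat, div_self two_ne_zero, cpow_one]

theorem re_mul_conj_add_mul_conj_sub_sq_norm_le (α β z w : ℂ) :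
    (α * z * conj w + β * conj z * w - ((‖z‖ : ℝ) : ℂ) ^ 2 - ((‖w‖ : ℝ) : ℂ) ^ 2).re ≤
      -(1 - (‖α‖ + ‖β‖) / 2) * ‖z‖ ^ 2 - (1 - (‖α‖ + ‖β‖) / 2) * ‖w‖ ^ 2 := by
  have hα : (α * z * conj w).re ≤ ‖α‖ * (‖z‖ * ‖w‖) := by
    simpa [mul_assoc] using re_le_norm (α * z * conj w)
  have hβ : (β * conj z * w).re ≤ ‖β‖ * (‖z‖ * ‖w‖) := by
    simpa [mul_assoc] using re_le_norm (β * conj z * w)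
  have h_sq (x : ℂ) : (((‖x‖ : ℝ) : ℂ) ^ 2).re = ‖x‖ ^ 2 := by rw [← ofReal_pow, ofReal_re]
  rw [sub_re, sub_re, add_re, h_sq, h_sq]
  nlinarith [mul_nonneg (add_nonneg (norm_nonneg α) (norm_nonneg β)) (sq_nonneg (‖z‖ - ‖w‖))]

theorem integrable_cexp_mul_conj_add_mul_conj_sub_sq_norm {α β : ℂ} (h : ‖α‖ + ‖β‖ < 2) :
    Integrable (fun p : ℂ × ℂ =>
      cexp (α * p.1 * conj p.2 + β * conj p.1 * p.2
        - ((‖p.1‖ : ℝ) : ℂ) ^ 2 - ((‖p.2‖ : ℝ) : ℂ) ^ 2)) := by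
  set ε : ℝ := 1 - (‖α‖ + ‖β‖) / 2
  have hε : 0 < (ε : ℂ).re := by simp only [ε, ofReal_re]; linarith
  have h_gauss : Integrable (fun z : ℂ => cexp (-ε * ((‖z‖ : ℝ) : ℂ) ^ 2)) := by
    simpa using GaussianFourier.integrable_cexp_neg_mul_sq_norm_add hε 0 (0 : ℂ)
  refine (h_gauss.mul_prod h_gauss).mono (by fun_prop) (.of_forall fun p => ?_)
  rw [← exp_add, norm_exp, norm_exp, Real.exp_le_exp]
  convert re_mul_conj_add_mul_conj_sub_sq_norm_le α β p.1 p.2 using 1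
  simp only [add_re, ← ofReal_pow, ← ofReal_neg, ← ofReal_mul, ofReal_re]
  ring

theorem integral_cexp_mul_conj_add_mul_conj_sub_sq_norm_right (α β z : ℂ) :
    ∫ w : ℂ, cexp (α * z * conj w + β * conj z * w - ((‖z‖ : ℝ) : ℂ) ^ 2 - ((‖w‖ : ℝ) : ℂ) ^ 2) =
      π * cexp (-(1 - α * β) * ((‖z‖ : ℝ) : ℂ) ^ 2) := by
  have h_split (w : ℂ) :
      cexp (α * z * conj w + β * conj z * w - ((‖z‖ : ℝ) : ℂ) ^ 2 - ((‖w‖ : ℝ) : ℂ) ^ 2) =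
        cexp (-((‖z‖ : ℝ) : ℂ) ^ 2) *
          cexp (-1 * ((‖w‖ : ℝ) : ℂ) ^ 2 + β * conj z * w + α * z * conj w) := by
    rw [← exp_add]
    ring_nf
  have h_norm : β * conj z * (α * z) = α * β * ((‖z‖ : ℝ) : ℂ) ^ 2 := by
    linear_combination α * β * conj_mul' z
  simp_rw [h_split]
  rw [integral_const_mul, integral_cexp_neg_mul_sq_norm_add_mul_add_mul_conj (by simp),
    div_one, div_one, h_norm, mul_left_comm, ← exp_add]
  ring_nf

theorem re_mul_lt_one_of_norm_add_norm_lt_two {α β : ℂ} (h : ‖α‖ + ‖β‖ < 2) :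
    (α * β).re < 1 := by
  have h_le : (α * β).re ≤ ‖α‖ * ‖β‖ := (re_le_norm _).trans_eq (norm_mul α β)
  nlinarith [sq_nonneg (‖α‖ - ‖β‖), norm_nonneg α, norm_nonneg β]

theorem integral_cexp_mul_conj_add_mul_conj_sub_sq_norm {α β : ℂ} (h : ‖α‖ + ‖β‖ < 2) :
    ∫ p : ℂ × ℂ, cexp (α * p.1 * conj p.2 + β * conj p.1 * p.2
        - ((‖p.1‖ : ℝ) : ℂ) ^ 2 - ((‖p.2‖ : ℝ) : ℂ) ^ 2) = π ^ 2 / (1 - α * β) := by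
  have h_re : 0 < (1 - α * β).re := by
    rw [sub_re, one_re, sub_pos]
    exact re_mul_lt_one_of_norm_add_norm_lt_two h
  have h_outer : ∫ z : ℂ, cexp (-(1 - α * β) * ((‖z‖ : ℝ) : ℂ) ^ 2) = π / (1 - α * β) := by
    simpa using integral_cexp_neg_mul_sq_norm_add_mul_add_mul_conj h_re 0 0
  rw [Measure.volume_eq_prod, integral_prod _ (integrable_cexp_mul_conj_add_mul_conj_sub_sq_norm h)]
  simp_rw [integral_cexp_mul_conj_add_mul_conj_sub_sq_norm_right]
  rw [integral_const_mul, h_outer]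
  ring

/-- Base Gaussian integral over ℂ²:
`(1/π²) ∫∫ exp(α z w̄ + β z̄ w − |z|² − |w|²) d²z d²w = 1/(1 − αβ)` for `|α| < 1`, `|β| ≤ 1`. -/
theorem stmt_3 (α β : ℝ) (hα : |α| < 1) (hβ : |β| ≤ 1) :
    Integrable (fun p : ℂ × ℂ =>
        Complex.exp ((α : ℂ) * p.1 * (starRingEnd ℂ) p.2 + (β : ℂ) * (starRingEnd ℂ) p.1 * p.2
          - ((‖p.1‖ : ℝ) : ℂ) ^ 2 - ((‖p.2‖ : ℝ) : ℂ) ^ 2)) ∧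
      (1 / (Real.pi : ℂ) ^ 2) *
          ∫ p : ℂ × ℂ,
            Complex.exp ((α : ℂ) * p.1 * (starRingEnd ℂ) p.2 + (β : ℂ) * (starRingEnd ℂ) p.1 * p.2
              - ((‖p.1‖ : ℝ) : ℂ) ^ 2 - ((‖p.2‖ : ℝ) : ℂ) ^ 2) =
        1 / (1 - (α : ℂ) * (β : ℂ)) := by
  have h : ‖(α : ℂ)‖ + ‖(β : ℂ)‖ < 2 := by
    rw [norm_real, norm_real, Real.norm_eq_abs, Real.norm_eq_abs]
    linarith
  refine ⟨integrable_cexp_mul_conj_add_mul_conj_sub_sq_norm h, ?_⟩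
  rw [integral_cexp_mul_conj_add_mul_conj_sub_sq_norm h]
  field_simp
end

section
/- For a real number a with |a| < 1, the function (z,w) ↦ (z² − w̄²)(z̄² − w²)·exp(a z w̄ + z̄ w − |z|² − |w|²) is integrable on ℂ², and (1/π²)·∫_{ℂ}∫_{ℂ} (z² − w̄²)(z̄² − w²)·exp(a z w̄ + z̄ w − |z|² − |w|²) d²z d²w = 4/(1 − a)³. -/
/-!
Write `G(w) = exp (-b w w̄ + c₁ w + c₂ w̄)` with `0 < re b`. In real coordinates the one-dimensional
Gaussian integral gives `∫ G = π / b · exp (c₁ c₂ / b)`. The moments `M j k = ∫ w ^ j w̄ ^ k G` then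
follow by integration by parts: the Wirtinger derivatives `∂_w` and `∂_w̄` of `w ^ j w̄ ^ k G`
integrate to zero, i.e. `b M (j + 1) k = c₂ M j k + k M j (k - 1)` and
`b M j (k + 1) = c₁ M j k + j M (j - 1) k`.

For fixed `z`, the integrand is `e^{-|z|²}` times a polynomial in `w, w̄` against `G` with `b = 1`,
`c₁ = z̄`, `c₂ = a z`. Its integral over `w` is therefore `π e^{-(1 - a)|z|²}` times a polynomial
in `z, z̄`, which is again a polynomial against `G`, now with `b = 1 - a` and `c₁ = c₂ = 0`.
-/

open MeasureTheory Complex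
open scoped ComplexConjugate
open Real

noncomputable section

theorem integral_eq_zero_of_hasLineDerivAt {E F : Type*} [NormedAddCommGroup E] [NormedSpace ℝ E]
    [FiniteDimensional ℝ E] [MeasurableSpace E] [BorelSpace E] {μ : Measure E}
    [μ.IsAddHaarMeasure] [NormedAddCommGroup F] [NormedSpace ℝ F] {f f' : E → F} {v : E}
    (hf : ∀ x, HasLineDerivAt ℝ f (f' x) x v) (hf' : Integrable f' μ) (hfi : Integrable f μ) :
    ∫ x, f' x ∂μ = 0 := by
  have := integral_bilinear_hasLineDerivAt_right_eq_neg_left_of_integrable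
    (f := fun _ => (1 : ℝ)) (f' := 0) (g := f) (g' := f') (v := v)
    (B := ContinuousLinearMap.lsmul ℝ ℝ) (by simp) (by simpa using hf') (by simpa using hfi)
    (fun _ _ => hasDerivAt_const _ _) (fun x _ => hf x)
  simpa using this

lemma Real.pow_mul_exp_neg_mul_sq_le {x ε : ℝ} (hx : 0 ≤ x) (hε : 0 < ε) (n : ℕ) :
    x ^ n * rexp (-(ε * x ^ 2)) ≤ n.factorial * rexp (1 / (4 * ε)) := by
  have hpow : x ^ n ≤ n.factorial * rexp x := by
    have := Real.pow_div_factorial_le_exp x hx n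
    rwa [div_le_iff₀' (by positivity)] at this
  have hsq : x - ε * x ^ 2 ≤ 1 / (4 * ε) := by
    have : 1 / (4 * ε) - (x - ε * x ^ 2) = (2 * ε * x - 1) ^ 2 / (4 * ε) := by
      field_simp
      ring
    linarith [show 0 ≤ (2 * ε * x - 1) ^ 2 / (4 * ε) by positivity]
  calc x ^ n * rexp (-(ε * x ^ 2))
      ≤ n.factorial * rexp x * rexp (-(ε * x ^ 2)) := by gcongr
    _ = n.factorial * rexp (x - ε * x ^ 2) := by rw [mul_assoc, ← Real.exp_add, sub_eq_add_neg]
    _ ≤ n.factorial * rexp (1 / (4 * ε)) := by gcongr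

def complexGaussian (b c₁ c₂ w : ℂ) : ℂ := cexp (-b * (w * conj w) + c₁ * w + c₂ * conj w)

def gaussianMonomial (b c₁ c₂ : ℂ) (j k : ℕ) (w : ℂ) : ℂ :=
  w ^ j * conj w ^ k * complexGaussian b c₁ c₂ w

def gaussianMoment (b c₁ c₂ : ℂ) (j k : ℕ) : ℂ := ∫ w, gaussianMonomial b c₁ c₂ j k w

section ComplexGaussian

variable {b : ℂ} (c₁ c₂ : ℂ)

@[fun_prop]
lemma continuous_complexGaussian (b : ℂ) : Continuous (complexGaussian b c₁ c₂) := by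
  unfold complexGaussian
  fun_prop

lemma complexGaussian_comp_measurableEquivPi_symm (v : Fin 2 → ℝ) :
    complexGaussian b c₁ c₂ (measurableEquivPi.symm v) =
      cexp (-b * ∑ i, (v i : ℂ) ^ 2 + ∑ i, ![c₁ + c₂, I * (c₁ - c₂)] i * v i) := by
  simp only [complexGaussian, measurableEquivPi_symm_apply, Fin.sum_univ_two, map_add, map_mul,
    conj_ofReal, conj_I, Matrix.cons_val_zero, Matrix.cons_val_one]
  congr 1
  linear_combination b * (v 1 : ℂ) ^ 2 * I_sq

theorem integrable_complexGaussian (hb : 0 < b.re) : Integrable (complexGaussian b c₁ c₂) := by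
  rw [← volume_preserving_equiv_pi.symm.integrable_comp_emb
    measurableEquivPi.symm.measurableEmbedding]
  simpa only [Function.comp_def, complexGaussian_comp_measurableEquivPi_symm] using
    GaussianFourier.integrable_cexp_neg_mul_sum_add hb _

theorem integral_complexGaussian (hb : 0 < b.re) :
    ∫ w, complexGaussian b c₁ c₂ w = π / b * cexp (c₁ * c₂ / b) := by
  have hb0 : b ≠ 0 := fun h => by simp [h] at hb
  rw [← volume_preserving_equiv_pi.symm.integral_comp' (g := complexGaussian b c₁ c₂)]
  simp only [complexGaussian_comp_measurableEquivPi_symm]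
  rw [GaussianFourier.integral_cexp_neg_mul_sum_add hb]
  simp only [Fintype.card_fin, Fin.sum_univ_two, Matrix.cons_val_zero, Matrix.cons_val_one]
  congr 1
  · norm_num
  · congr 1
    field_simp
    linear_combination (c₁ - c₂) ^ 2 * I_sq

lemma complexGaussian_eq_cexp_mul (r : ℝ) (w : ℂ) :
    complexGaussian b c₁ c₂ w = cexp (-(r * ‖w‖ ^ 2) : ℝ) * complexGaussian (b - r) c₁ c₂ w := by
  rw [complexGaussian, complexGaussian, ← Complex.exp_add, mul_conj']
  push_cast
  ring_nf

theorem integrable_gaussianMonomial (hb : 0 < b.re) (j k : ℕ) :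
    Integrable (gaussianMonomial b c₁ c₂ j k) := by
  set ε := b.re / 2
  have hε : 0 < ε := half_pos hb
  have hb' : 0 < (b - ε).re := by simp [ε]; linarith
  refine ((integrable_complexGaussian (b := b - ε) c₁ c₂ hb').norm.const_mul
    ((j + k).factorial * rexp (1 / (4 * ε)))).mono' (by unfold gaussianMonomial; fun_prop)
    (.of_forall fun w => ?_)
  rw [gaussianMonomial, complexGaussian_eq_cexp_mul c₁ c₂ ε, norm_mul, norm_mul, norm_mul,
    norm_pow, norm_pow, Complex.norm_conj, Complex.norm_exp_ofReal, ← mul_assoc, ← pow_add]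
  exact mul_le_mul_of_nonneg_right
    (Real.pow_mul_exp_neg_mul_sq_le (norm_nonneg w) hε (j + k)) (norm_nonneg _)

lemma norm_gaussianMonomial_ofReal (r : ℝ) (j k : ℕ) (w : ℂ) :
    ‖gaussianMonomial r 0 0 j k w‖ = ‖w‖ ^ (j + k) * rexp (-(r * ‖w‖ ^ 2)) := by
  rw [gaussianMonomial, complexGaussian, mul_conj', norm_mul, norm_mul, norm_pow, norm_pow,
    norm_conj, pow_add, zero_mul, zero_mul, add_zero, add_zero, ← ofReal_pow, ← ofReal_neg,
    ← ofReal_mul, neg_mul, norm_exp_ofReal]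

lemma hasLineDerivAt_gaussianMonomial (j k : ℕ) (w v : ℂ) :
    HasLineDerivAt ℝ (gaussianMonomial b c₁ c₂ j k)
      (v * (j * gaussianMonomial b c₁ c₂ (j - 1) k w + c₁ * gaussianMonomial b c₁ c₂ j k w
          - b * gaussianMonomial b c₁ c₂ j (k + 1) w) +
        conj v * (k * gaussianMonomial b c₁ c₂ j (k - 1) w + c₂ * gaussianMonomial b c₁ c₂ j k w
          - b * gaussianMonomial b c₁ c₂ (j + 1) k w)) w v := by
  have hp : HasDerivAt (fun t : ℝ => w + t • v) v 0 := by
    simpa using ((hasDerivAt_id (0 : ℝ)).smul_const v).const_add w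
  have hq : HasDerivAt (fun t : ℝ => conj (w + t • v)) (conj v) 0 := hp.star
  have hexp := (((hp.mul hq).const_mul (-b)).add (hp.const_mul c₁)).add (hq.const_mul c₂) |>.cexp
  unfold HasLineDerivAt gaussianMonomial complexGaussian
  refine (((hp.pow j).mul (hq.pow k)).mul hexp).congr_deriv ?_
  simp only [Pi.mul_apply, Pi.pow_apply, Pi.add_apply, zero_smul, add_zero]
  ring

theorem gaussianMoment_wirtinger (hb : 0 < b.re) (j k : ℕ) :
    j * gaussianMoment b c₁ c₂ (j - 1) k + c₁ * gaussianMoment b c₁ c₂ j k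
        - b * gaussianMoment b c₁ c₂ j (k + 1) = 0 ∧
      k * gaussianMoment b c₁ c₂ j (k - 1) + c₂ * gaussianMoment b c₁ c₂ j k
        - b * gaussianMoment b c₁ c₂ (j + 1) k = 0 := by
  have hF := integrable_gaussianMonomial c₁ c₂ hb
  have lin (α β γ : ℂ) (j₁ k₁ j₂ k₂ j₃ k₃ : ℕ) :
      ∫ w, (α * gaussianMonomial b c₁ c₂ j₁ k₁ w + β * gaussianMonomial b c₁ c₂ j₂ k₂ w
        - γ * gaussianMonomial b c₁ c₂ j₃ k₃ w) =
      α * gaussianMoment b c₁ c₂ j₁ k₁ + β * gaussianMoment b c₁ c₂ j₂ k₂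
        - γ * gaussianMoment b c₁ c₂ j₃ k₃ := by
    rw [integral_sub (by fun_prop) ((hF _ _).const_mul _),
      integral_add ((hF _ _).const_mul _) ((hF _ _).const_mul _)]
    simp only [integral_const_mul, gaussianMoment]
  have hA : Integrable fun w => j * gaussianMonomial b c₁ c₂ (j - 1) k w
      + c₁ * gaussianMonomial b c₁ c₂ j k w - b * gaussianMonomial b c₁ c₂ j (k + 1) w := by
    fun_prop
  have hB : Integrable fun w => k * gaussianMonomial b c₁ c₂ j (k - 1) w
      + c₂ * gaussianMonomial b c₁ c₂ j k w - b * gaussianMonomial b c₁ c₂ (j + 1) k w := by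
    fun_prop
  have ibp (v : ℂ) := integral_eq_zero_of_hasLineDerivAt
    (fun w => hasLineDerivAt_gaussianMonomial c₁ c₂ j k w v)
    ((hA.const_mul v).add (hB.const_mul (conj v))) (hF j k)
  simp only [integral_add (hA.const_mul _) (hB.const_mul _), integral_const_mul, lin] at ibp
  set A := j * gaussianMoment b c₁ c₂ (j - 1) k + c₁ * gaussianMoment b c₁ c₂ j k
    - b * gaussianMoment b c₁ c₂ j (k + 1)
  set B := k * gaussianMoment b c₁ c₂ j (k - 1) + c₂ * gaussianMoment b c₁ c₂ j k
    - b * gaussianMoment b c₁ c₂ (j + 1) k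
  -- the directions `1` and `I` separate the `∂_w` part `A` from the `∂_w̄` part `B`
  have h1 : A + B = 0 := by simpa using ibp 1
  have hI : I * A + -(I * B) = 0 := by simpa using ibp I
  constructor
  · linear_combination (h1 - I * hI) / 2 + (A - B) / 2 * I_sq
  · linear_combination (h1 + I * hI) / 2 - (A - B) / 2 * I_sq

theorem mul_gaussianMoment_succ_left (hb : 0 < b.re) (j k : ℕ) :
    b * gaussianMoment b c₁ c₂ (j + 1) k =
      c₂ * gaussianMoment b c₁ c₂ j k + k * gaussianMoment b c₁ c₂ j (k - 1) := by
  linear_combination -(gaussianMoment_wirtinger c₁ c₂ hb j k).2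

theorem mul_gaussianMoment_succ_right (hb : 0 < b.re) (j k : ℕ) :
    b * gaussianMoment b c₁ c₂ j (k + 1) =
      c₁ * gaussianMoment b c₁ c₂ j k + j * gaussianMoment b c₁ c₂ (j - 1) k := by
  linear_combination -(gaussianMoment_wirtinger c₁ c₂ hb j k).1

theorem gaussianMoment_zero_zero (hb : 0 < b.re) :
    gaussianMoment b c₁ c₂ 0 0 = π / b * cexp (c₁ * c₂ / b) := by
  simpa [gaussianMoment, gaussianMonomial] using integral_complexGaussian c₁ c₂ hb

theorem pow_mul_gaussianMoment_left (hb : 0 < b.re) (j : ℕ) :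
    b ^ j * gaussianMoment b c₁ c₂ j 0 = c₂ ^ j * gaussianMoment b c₁ c₂ 0 0 := by
  induction j with
  | zero => simp
  | succ j ih => linear_combination b ^ j * mul_gaussianMoment_succ_left c₁ c₂ hb j 0 + c₂ * ih

theorem pow_mul_gaussianMoment_right (hb : 0 < b.re) (k : ℕ) :
    b ^ k * gaussianMoment b c₁ c₂ 0 k = c₁ ^ k * gaussianMoment b c₁ c₂ 0 0 := by
  induction k with
  | zero => simp
  | succ k ih => linear_combination b ^ k * mul_gaussianMoment_succ_right c₁ c₂ hb 0 k + c₁ * ih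

theorem sq_mul_gaussianMoment_one_one (hb : 0 < b.re) :
    b ^ 2 * gaussianMoment b c₁ c₂ 1 1 = (c₁ * c₂ + b) * gaussianMoment b c₁ c₂ 0 0 := by
  have h11 := mul_gaussianMoment_succ_left c₁ c₂ hb 0 1
  have h01 := pow_mul_gaussianMoment_right c₁ c₂ hb 1
  norm_num at h11 h01
  linear_combination b * h11 + c₂ * h01

theorem pow_four_mul_gaussianMoment_two_two (hb : 0 < b.re) :
    b ^ 4 * gaussianMoment b c₁ c₂ 2 2 =
      ((c₁ * c₂) ^ 2 + 4 * b * (c₁ * c₂) + 2 * b ^ 2) * gaussianMoment b c₁ c₂ 0 0 := by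
  have h11 := sq_mul_gaussianMoment_one_one c₁ c₂ hb
  have h12 := mul_gaussianMoment_succ_left c₁ c₂ hb 0 2
  have h22 := mul_gaussianMoment_succ_left c₁ c₂ hb 1 2
  have h01 := pow_mul_gaussianMoment_right c₁ c₂ hb 1
  have h02 := pow_mul_gaussianMoment_right c₁ c₂ hb 2
  norm_num at h12 h22 h01 h02
  linear_combination b ^ 3 * h22 + b ^ 2 * c₂ * h12 + c₂ ^ 2 * h02 + 2 * b * c₂ * h01
    + 2 * b * h11

end ComplexGaussian

def squeezingIntegrand (a z w : ℂ) : ℂ :=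
  (z ^ 2 - conj w ^ 2) * (conj z ^ 2 - w ^ 2) *
    cexp (a * z * conj w + conj z * w - (‖z‖ : ℂ) ^ 2 - (‖w‖ : ℂ) ^ 2)

def squeezingMarginal (a z : ℂ) : ℂ :=
  π * ((1 + a ^ 2) * (z ^ 2 * conj z ^ 2) + 4 * a * (z * conj z) + 2 - a ^ 2 * z ^ 4
    - conj z ^ 4) * complexGaussian (1 - a) 0 0 z

lemma norm_sq_sub_mul_sq_sub_le (z w : ℂ) :
    ‖(z ^ 2 - conj w ^ 2) * (conj z ^ 2 - w ^ 2)‖ ≤ 2 * ((1 + ‖z‖ ^ 4) * (1 + ‖w‖ ^ 4)) := by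
  have h₁ : ‖z ^ 2 - conj w ^ 2‖ ≤ ‖z‖ ^ 2 + ‖w‖ ^ 2 :=
    (norm_sub_le _ _).trans_eq (by rw [norm_pow, norm_pow, norm_conj])
  have h₂ : ‖conj z ^ 2 - w ^ 2‖ ≤ ‖z‖ ^ 2 + ‖w‖ ^ 2 :=
    (norm_sub_le _ _).trans_eq (by rw [norm_pow, norm_pow, norm_conj])
  rw [norm_mul]
  calc ‖z ^ 2 - conj w ^ 2‖ * ‖conj z ^ 2 - w ^ 2‖ ≤ (‖z‖ ^ 2 + ‖w‖ ^ 2) ^ 2 := by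
        rw [sq (‖z‖ ^ 2 + ‖w‖ ^ 2)]
        exact mul_le_mul h₁ h₂ (norm_nonneg _) (by positivity)
    _ ≤ 2 * ((1 + ‖z‖ ^ 4) * (1 + ‖w‖ ^ 4)) := by
        nlinarith [sq_nonneg (‖z‖ ^ 2 - ‖w‖ ^ 2), mul_nonneg (pow_nonneg (norm_nonneg z) 4)
          (pow_nonneg (norm_nonneg w) 4)]

lemma norm_cexp_squeezing_le (a z w : ℂ) :
    ‖cexp (a * z * conj w + conj z * w - (‖z‖ : ℂ) ^ 2 - (‖w‖ : ℂ) ^ 2)‖ ≤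
      rexp (-((1 - ‖a‖) / 2 * ‖z‖ ^ 2)) * rexp (-((1 - ‖a‖) / 2 * ‖w‖ ^ 2)) := by
  rw [Complex.norm_exp, ← Real.exp_add, Real.exp_le_exp]
  have h₁ := re_le_norm (a * z * conj w)
  have h₂ := re_le_norm (conj z * w)
  simp only [norm_mul, norm_conj] at h₁ h₂
  norm_cast
  simp only [sub_re, add_re, ofReal_re]
  nlinarith [sq_nonneg (‖z‖ - ‖w‖), mul_nonneg (norm_nonneg a) (sq_nonneg (‖z‖ - ‖w‖))]

theorem integrable_squeezingIntegrand {a : ℂ} (ha : ‖a‖ < 1) :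
    Integrable fun p : ℂ × ℂ => squeezingIntegrand a p.1 p.2 := by
  set ε := (1 - ‖a‖) / 2
  have hε : 0 < (ε : ℂ).re := by simp [ε]; linarith
  have hF := integrable_gaussianMonomial (b := ε) 0 0 hε
  have hh := (hF 0 0).norm.add (hF 2 2).norm
  refine ((hh.mul_prod hh).const_mul 2).mono' (by unfold squeezingIntegrand; fun_prop)
    (.of_forall fun ⟨z, w⟩ => ?_)
  simp only [Pi.add_apply, norm_gaussianMonomial_ofReal]
  rw [squeezingIntegrand, norm_mul]
  calc _ ≤ 2 * ((1 + ‖z‖ ^ 4) * (1 + ‖w‖ ^ 4)) *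
        (rexp (-(ε * ‖z‖ ^ 2)) * rexp (-(ε * ‖w‖ ^ 2))) :=
        mul_le_mul (norm_sq_sub_mul_sq_sub_le z w) (norm_cexp_squeezing_le a z w) (norm_nonneg _)
          (by positivity)
    _ = _ := by ring

theorem integral_squeezingIntegrand_right (a z : ℂ) :
    ∫ w, squeezingIntegrand a z w = squeezingMarginal a z := by
  have hb : (0 : ℝ) < (1 : ℂ).re := by simp
  have hF := integrable_gaussianMonomial (conj z) (a * z) hb
  have expand (w : ℂ) : squeezingIntegrand a z w = cexp (-(z * conj z)) *
      (z ^ 2 * conj z ^ 2 * gaussianMonomial 1 (conj z) (a * z) 0 0 w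
        - z ^ 2 * gaussianMonomial 1 (conj z) (a * z) 2 0 w
        - conj z ^ 2 * gaussianMonomial 1 (conj z) (a * z) 0 2 w
        + gaussianMonomial 1 (conj z) (a * z) 2 2 w) := by
    simp only [squeezingIntegrand, gaussianMonomial, complexGaussian, ← mul_conj']
    rw [show a * z * conj w + conj z * w - z * conj z - w * conj w
        = -(z * conj z) + (-1 * (w * conj w) + conj z * w + a * z * conj w) by ring,
      Complex.exp_add]
    ring
  simp only [expand]
  rw [integral_const_mul, integral_add (by fun_prop) (hF 2 2), integral_sub (by fun_prop)
    ((hF 0 2).const_mul _), integral_sub ((hF 0 0).const_mul _) ((hF 2 0).const_mul _)]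
  simp only [integral_const_mul]
  have h00 := gaussianMoment_zero_zero (conj z) (a * z) hb
  have h20 := pow_mul_gaussianMoment_left (conj z) (a * z) hb 2
  have h02 := pow_mul_gaussianMoment_right (conj z) (a * z) hb 2
  have h22 := pow_four_mul_gaussianMoment_two_two (conj z) (a * z) hb
  simp only [one_pow, one_mul, mul_one, div_one, gaussianMoment] at h00 h20 h02 h22
  have hexp : cexp (-(z * conj z)) * cexp (conj z * (a * z)) = complexGaussian (1 - a) 0 0 z := by
    rw [complexGaussian, ← Complex.exp_add]
    ring_nf
  rw [h20, h02, h22, h00, squeezingMarginal]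
  linear_combination π * ((1 + a ^ 2) * (z ^ 2 * conj z ^ 2) + 4 * a * (z * conj z) + 2
    - a ^ 2 * z ^ 4 - conj z ^ 4) * hexp

theorem integral_squeezingMarginal {a : ℂ} (ha : a.re < 1) :
    ∫ z, squeezingMarginal a z = 4 * π ^ 2 / (1 - a) ^ 3 := by
  set b := 1 - a
  have hb : 0 < b.re := by simp [b]; linarith
  have hb0 : b ≠ 0 := fun h => by simp [h] at hb
  have hF := integrable_gaussianMonomial (b := b) 0 0 hb
  have expand (z : ℂ) : squeezingMarginal a z = π *
      ((1 + a ^ 2) * gaussianMonomial b 0 0 2 2 z + 4 * a * gaussianMonomial b 0 0 1 1 z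
        + 2 * gaussianMonomial b 0 0 0 0 z - a ^ 2 * gaussianMonomial b 0 0 4 0 z
        - gaussianMonomial b 0 0 0 4 z) := by
    simp only [squeezingMarginal, gaussianMonomial]
    ring
  simp only [expand]
  rw [integral_const_mul, integral_sub (by fun_prop) (hF 0 4), integral_sub (by fun_prop)
    ((hF 4 0).const_mul _), integral_add (by fun_prop) ((hF 0 0).const_mul _),
    integral_add ((hF 2 2).const_mul _) ((hF 1 1).const_mul _)]
  simp only [integral_const_mul]
  have h00 := gaussianMoment_zero_zero (b := b) 0 0 hb
  have h11 := sq_mul_gaussianMoment_one_one (b := b) 0 0 hb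
  have h22 := pow_four_mul_gaussianMoment_two_two (b := b) 0 0 hb
  have h40 := pow_mul_gaussianMoment_left (b := b) 0 0 hb 4
  have h04 := pow_mul_gaussianMoment_right (b := b) 0 0 hb 4
  simp only [mul_zero, zero_mul, zero_div, Complex.exp_zero, mul_one, zero_add, ne_eq,
    OfNat.ofNat_ne_zero, not_false_eq_true, zero_pow, gaussianMoment] at h00 h11 h22 h40 h04
  have e11 : ∫ w, gaussianMonomial b 0 0 1 1 w = π / b ^ 2 :=
    mul_left_cancel₀ (pow_ne_zero 2 hb0) (by rw [h11, h00]; field_simp)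
  have e22 : ∫ w, gaussianMonomial b 0 0 2 2 w = 2 * π / b ^ 3 :=
    mul_left_cancel₀ (pow_ne_zero 4 hb0) (by rw [h22, h00]; field_simp)
  have e40 : ∫ w, gaussianMonomial b 0 0 4 0 w = 0 := by simpa [hb0] using h40
  have e04 : ∫ w, gaussianMonomial b 0 0 0 4 w = 0 := by simpa [hb0] using h04
  rw [e11, e22, e40, e04, h00]
  field_simp
  ring

end

/-- Gaussian integral over ℂ²:
`(1/π²) ∫∫ (z² − w̄²)(z̄² − w²) exp(a z w̄ + z̄ w − |z|² − |w|²) d²z d²w = 4/(1 − a)³`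
for `|a| < 1`. -/
theorem stmt_5 (a : ℝ) (ha : |a| < 1) :
    Integrable (fun p : ℂ × ℂ =>
        (p.1 ^ 2 - (starRingEnd ℂ) p.2 ^ 2) * ((starRingEnd ℂ) p.1 ^ 2 - p.2 ^ 2) *
          Complex.exp ((a : ℂ) * p.1 * (starRingEnd ℂ) p.2 + (starRingEnd ℂ) p.1 * p.2
            - (‖p.1‖ : ℂ) ^ 2 - (‖p.2‖ : ℂ) ^ 2)) ∧
      (1 / (Real.pi : ℂ) ^ 2) *
          ∫ p : ℂ × ℂ,
            (p.1 ^ 2 - (starRingEnd ℂ) p.2 ^ 2) * ((starRingEnd ℂ) p.1 ^ 2 - p.2 ^ 2) *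
              Complex.exp ((a : ℂ) * p.1 * (starRingEnd ℂ) p.2 + (starRingEnd ℂ) p.1 * p.2
                - (‖p.1‖ : ℂ) ^ 2 - (‖p.2‖ : ℂ) ^ 2) =
        4 / (1 - (a : ℂ)) ^ 3 := by
  have hint := integrable_squeezingIntegrand (a := a) (by simpa using ha)
  refine ⟨hint, ?_⟩
  change 1 / (π : ℂ) ^ 2 * ∫ p : ℂ × ℂ, squeezingIntegrand a p.1 p.2 = _
  rw [Measure.volume_eq_prod, integral_prod _ hint]
  simp only [integral_squeezingIntegrand_right]
  rw [integral_squeezingMarginal (by simpa using (abs_lt.mp ha).2)]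
  field_simp
end

section
/- Let C be a real 2×2 matrix, S a real 2×2 matrix with det S = 1, ν₂ > 0, and set V_i := ν₂·S·Sᵀ. Let dV be the real 4×4 block matrix with zero diagonal 2×2 blocks, top-right block D := C·(Sᵀ)⁻¹ and bottom-left block Dᵀ. With the 4×4 matrices S₁₂ := E_{41}+E_{32}+E_{23}+E_{14}, T₁₂ := E_{31}−E_{42}+E_{13}−E_{24}, A₁₂ := E_{41}−E_{32}−E_{23}+E_{14}, B₁₂ := E_{31}+E_{42}+E_{13}+E_{24} (where E_{ij} is the matrix with a single 1 in entry (i,j)), it holds that Tr(dV·S₁₂)² + Tr(dV·T₁₂)² + Tr(dV·A₁₂)² + Tr(dV·B₁₂)² = 8·ν₂·Tr(C·V_i⁻¹·Cᵀ). -/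
open Matrix

/-!
Since `(ν S Sᵀ)⁻¹ = ν⁻¹ (Sᵀ)⁻¹ S⁻¹`, the right-hand side is `8 Tr(D Dᵀ)`, i.e. eight times the
sum of squares of the entries of `D`. Each of the four traces on the left picks out twice a sum
or difference of two entries of `D`, and the parallelogram law
`(a + b)² + (a - b)² = 2 (a² + b²)` finishes the computation.
-/

namespace Matrix

variable {m n K : Type*} [Fintype n] [DecidableEq n] [Field K]

theorem inv_smul₀ (k : K) (A : Matrix n n K) : (k • A)⁻¹ = k⁻¹ • A⁻¹ := by
  rcases eq_or_ne k 0 with rfl | hk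
  · simp
  by_cases hA : IsUnit A.det
  · exact inv_smul' A (Units.mk0 k hk) hA
  · have hkA : ¬IsUnit (k • A).det := by simpa [det_smul, hk] using hA
    rw [nonsing_inv_apply_not_isUnit _ hA, nonsing_inv_apply_not_isUnit _ hkA, smul_zero]

theorem mul_inv_smul_mul_transpose_mul_transpose (C : Matrix m n K) (S : Matrix n n K) (k : K) :
    C * (k • (S * Sᵀ))⁻¹ * Cᵀ = k⁻¹ • (C * (Sᵀ)⁻¹ * (C * (Sᵀ)⁻¹)ᵀ) := by
  rw [inv_smul₀, mul_inv_rev, transpose_mul, transpose_nonsing_inv, transpose_transpose]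
  simp only [Matrix.mul_smul, Matrix.smul_mul, Matrix.mul_assoc]

theorem trace_mul_single_one [Fintype m] [DecidableEq m] {R : Type*} [Semiring R]
    (M : Matrix m n R) (i : n) (j : m) :
    (M * single i j (1 : R)).trace = M j i := by
  simp [trace_mul_single]

omit [DecidableEq n] in
theorem trace_mul_transpose_self [Fintype m] {R : Type*} [CommSemiring R] (A : Matrix m n R) :
    (A * Aᵀ).trace = ∑ i, ∑ j, A i j ^ 2 := by
  simp [trace, mul_apply, sq]

end Matrix

theorem stmt_8_general (C S : Matrix (Fin 2) (Fin 2) ℝ) (ν₂ : ℝ) (hν : 0 < ν₂)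
    (Vi : Matrix (Fin 2) (Fin 2) ℝ) (hVi : Vi = ν₂ • (S * Sᵀ))
    (D : Matrix (Fin 2) (Fin 2) ℝ) (hD : D = C * (Sᵀ)⁻¹)
    (dV : Matrix (Fin 4) (Fin 4) ℝ)
    (hdV : dV = !![0, 0, D 0 0, D 0 1;
                   0, 0, D 1 0, D 1 1;
                   D 0 0, D 1 0, 0, 0;
                   D 0 1, D 1 1, 0, 0])
    (S12 T12 A12 B12 : Matrix (Fin 4) (Fin 4) ℝ)
    (hS12 : S12 = Matrix.single 3 0 1 + Matrix.single 2 1 1 +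
      Matrix.single 1 2 1 + Matrix.single 0 3 1)
    (hT12 : T12 = Matrix.single 2 0 1 - Matrix.single 3 1 1 +
      Matrix.single 0 2 1 - Matrix.single 1 3 1)
    (hA12 : A12 = Matrix.single 3 0 1 - Matrix.single 2 1 1 -
      Matrix.single 1 2 1 + Matrix.single 0 3 1)
    (hB12 : B12 = Matrix.single 2 0 1 + Matrix.single 3 1 1 +
      Matrix.single 0 2 1 + Matrix.single 1 3 1) :
    (dV * S12).trace ^ 2 + (dV * T12).trace ^ 2 + (dV * A12).trace ^ 2 + (dV * B12).trace ^ 2 =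
      8 * ν₂ * (C * Vi⁻¹ * Cᵀ).trace := by
  have hrhs : C * Vi⁻¹ * Cᵀ = ν₂⁻¹ • (D * Dᵀ) := by
    rw [hVi, hD, mul_inv_smul_mul_transpose_mul_transpose]
  obtain ⟨hS₁₂, hT₁₂, hA₁₂, hB₁₂⟩ :
      (dV * S12).trace = 2 * (D 0 1 + D 1 0) ∧ (dV * T12).trace = 2 * (D 0 0 - D 1 1) ∧
      (dV * A12).trace = 2 * (D 0 1 - D 1 0) ∧ (dV * B12).trace = 2 * (D 0 0 + D 1 1) := by
    rw [hdV, hS12, hT12, hA12, hB12]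
    simp only [Matrix.mul_add, Matrix.mul_sub, trace_add, trace_sub, trace_mul_single_one,
      of_apply, cons_val', cons_val, cons_val_fin_one, cons_val_zero, cons_val_one]
    refine ⟨?_, ?_, ?_, ?_⟩ <;> ring
  rw [hrhs, trace_smul, trace_mul_transpose_self, hS₁₂, hT₁₂, hA₁₂, hB₁₂]
  rw [smul_eq_mul, ← mul_assoc, mul_assoc 8, mul_inv_cancel₀ hν.ne', mul_one]
  simp only [Fin.sum_univ_two]
  ring

/-- Trace identity (Appendix B):
`Tr(dV S₁₂)² + Tr(dV T₁₂)² + Tr(dV A₁₂)² + Tr(dV B₁₂)² = 8 ν₂ Tr(C V_i⁻¹ Cᵀ)`,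
where `V_i = ν₂ S Sᵀ` with `det S = 1` and `dV` has off-diagonal blocks `D = C (Sᵀ)⁻¹`
and `Dᵀ`. -/
theorem stmt_8 (C S : Matrix (Fin 2) (Fin 2) ℝ) (hS : S.det = 1) (ν₂ : ℝ) (hν : 0 < ν₂)
    (Vi : Matrix (Fin 2) (Fin 2) ℝ) (hVi : Vi = ν₂ • (S * Sᵀ))
    (D : Matrix (Fin 2) (Fin 2) ℝ) (hD : D = C * (Sᵀ)⁻¹)
    (dV : Matrix (Fin 4) (Fin 4) ℝ)
    (hdV : dV = !![0, 0, D 0 0, D 0 1;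
                   0, 0, D 1 0, D 1 1;
                   D 0 0, D 1 0, 0, 0;
                   D 0 1, D 1 1, 0, 0])
    (S12 T12 A12 B12 : Matrix (Fin 4) (Fin 4) ℝ)
    (hS12 : S12 = Matrix.single 3 0 1 + Matrix.single 2 1 1 +
      Matrix.single 1 2 1 + Matrix.single 0 3 1)
    (hT12 : T12 = Matrix.single 2 0 1 - Matrix.single 3 1 1 +
      Matrix.single 0 2 1 - Matrix.single 1 3 1)
    (hA12 : A12 = Matrix.single 3 0 1 - Matrix.single 2 1 1 -
      Matrix.single 1 2 1 + Matrix.single 0 3 1)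
    (hB12 : B12 = Matrix.single 2 0 1 + Matrix.single 3 1 1 +
      Matrix.single 0 2 1 + Matrix.single 1 3 1) :
    (dV * S12).trace ^ 2 + (dV * T12).trace ^ 2 + (dV * A12).trace ^ 2 + (dV * B12).trace ^ 2 =
      8 * ν₂ * (C * Vi⁻¹ * Cᵀ).trace :=
  stmt_8_general C S ν₂ hν Vi hVi D hD dV hdV S12 T12 A12 B12 hS12 hT12 hA12 hB12
end

section
/- The function (N_S, N_B) ↦ (1 + N_S)·(√N_B + √(1+N_B))² / (√(N_B·N_S) + √((1+N_B)(1+N_S)))² tends to 4 along the product filter where N_S → 0 from the right and N_B → ∞. -/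
/-!
Dividing numerator and denominator by `N_B` turns the ratio into a function of `N_S` and
`N_B⁻¹` that is continuous at the origin, where it equals `(1 + 1)² / 1 = 4`.
-/

open Filter Topology

namespace CollectiveAdvantage

/-- The ratio in the variables `(N_S, N_B⁻¹)`. -/
noncomputable def rescaledRatio (q : ℝ × ℝ) : ℝ :=
  (1 + q.1) * (1 + √(1 + q.2)) ^ 2 / (√q.1 + √((1 + q.2) * (1 + q.1))) ^ 2

theorem continuousAt_rescaledRatio_zero : ContinuousAt rescaledRatio 0 := by
  unfold rescaledRatio
  apply ContinuousAt.div <;> first | fun_prop | norm_num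

theorem rescaledRatio_zero : rescaledRatio 0 = 4 := by
  norm_num [rescaledRatio]

theorem sqrt_one_add_eq_sqrt_mul {b : ℝ} (hb : 0 < b) (s : ℝ) :
    √((1 + b) * s) = √b * √((1 + b⁻¹) * s) := by
  rw [← Real.sqrt_mul hb.le, ← mul_assoc, mul_add, mul_inv_cancel₀ hb.ne', mul_one, add_comm]

theorem ratio_eq_rescaledRatio (s : ℝ) {b : ℝ} (hb : 0 < b) :
    (1 + s) * (√b + √(1 + b)) ^ 2 / (√(b * s) + √((1 + b) * (1 + s))) ^ 2 =
      rescaledRatio (s, b⁻¹) := by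
  have hnum : √b + √(1 + b) = √b * (1 + √(1 + b⁻¹)) := by
    simpa [mul_add] using congrArg (√b + ·) (sqrt_one_add_eq_sqrt_mul hb 1)
  have hden : √(b * s) + √((1 + b) * (1 + s)) = √b * (√s + √((1 + b⁻¹) * (1 + s))) := by
    rw [Real.sqrt_mul hb.le, sqrt_one_add_eq_sqrt_mul hb, ← mul_add]
  have hsqrt : √b ^ 2 ≠ 0 := by positivity
  rw [hnum, hden, mul_pow, mul_pow, mul_left_comm, mul_div_mul_left _ _ hsqrt]
  rfl

theorem tendsto_prodMap_inv_nhds_zero :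
    Tendsto (Prod.map id (·⁻¹)) (𝓝[>] (0 : ℝ) ×ˢ atTop) (𝓝 (0 : ℝ × ℝ)) := by
  rw [← Prod.mk_zero_zero, nhds_prod_eq]
  exact tendsto_nhdsWithin_of_tendsto_nhds tendsto_id |>.prodMap tendsto_inv_atTop_zero

end CollectiveAdvantage

open CollectiveAdvantage in
/-- The ratio `γ_col^{TMSV}/γ_col^{CI}` tends to 4 (the 6 dB collective advantage) in the
regime `N_S → 0⁺`, `N_B → ∞`. -/
theorem stmt_13 :
    Tendsto
      (fun p : ℝ × ℝ =>
        (1 + p.1) * (Real.sqrt p.2 + Real.sqrt (1 + p.2)) ^ 2 /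
          (Real.sqrt (p.2 * p.1) + Real.sqrt ((1 + p.2) * (1 + p.1))) ^ 2)
      ((nhdsWithin 0 (Set.Ioi 0)) ×ˢ atTop) (nhds 4) := by
  have hlim : Tendsto (rescaledRatio ∘ Prod.map id (·⁻¹)) (𝓝[>] 0 ×ˢ atTop) (𝓝 4) :=
    rescaledRatio_zero ▸ continuousAt_rescaledRatio_zero.tendsto.comp tendsto_prodMap_inv_nhds_zero
  refine hlim.congr' ?_
  filter_upwards [prod_mem_prod self_mem_nhdsWithin (Ioi_mem_atTop 0)] with p hp
  exact (ratio_eq_rescaledRatio p.1 hp.2).symm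
end

section
/- For all real numbers N_S > 0 and N_B > 0, 1 < (1 + N_S)(1 + 2N_B) / (1 + N_B + N_S + 2·N_B·N_S) < 2. -/
/-- The local quantum advantage ratio `γ_loc^{TMSV}/γ_loc^{CI}` is strictly between 1 and 2. -/
theorem stmt_17 (N_S N_B : ℝ) (hNS : 0 < N_S) (hNB : 0 < N_B) :
    1 < (1 + N_S) * (1 + 2 * N_B) / (1 + N_B + N_S + 2 * N_B * N_S) ∧
      (1 + N_S) * (1 + 2 * N_B) / (1 + N_B + N_S + 2 * N_B * N_S) < 2 := by
  have hD : 0 < 1 + N_B + N_S + 2 * N_B * N_S := by positivity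
  -- The numerator exceeds the denominator by `N_B`, and falls short of twice it by
  -- `1 + N_S + 2 N_B N_S`.
  refine ⟨(one_lt_div hD).2 ?_, (div_lt_iff₀ hD).2 ?_⟩
  · linear_combination hNB
  · linear_combination hNS + 2 * mul_pos hNB hNS
end

section
/- For all real numbers N_S > 0 and N_B > 0, 1 < (1 + N_S)·(√N_B + √(1+N_B))² / (√(N_B·N_S) + √((1+N_B)(1+N_S)))² < 4. -/
/-!
With `a = √N_B`, `b = √(1 + N_B)`, `s = √N_S`, `t = √(1 + N_S)` the ratio is
`(t (a + b) / (a s + b t))²`. Since `s < t`, `a s + b t < t (a + b)`; since `a < b`,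
`t (a + b) < 2 t b ≤ 2 (a s + b t)`. So the base lies in `(1, 2)` and its square in `(1, 4)`.
-/

lemma sq_div_sq_mem_Ioo_one_four {x y : ℝ} (hy : 0 < y) (hyx : y < x) (hx : x < 2 * y) :
    1 < x ^ 2 / y ^ 2 ∧ x ^ 2 / y ^ 2 < 4 := by
  have h_one : 1 < x / y := (one_lt_div hy).2 hyx
  have h_two : x / y < 2 := (div_lt_iff₀ hy).2 hx
  rw [← div_pow]
  constructor <;> nlinarith

section CrossSum

variable {a b s t : ℝ}

lemma mul_add_mul_lt_mul_add (ha : 0 < a) (hst : s < t) : a * s + b * t < t * (a + b) := by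
  nlinarith [mul_lt_mul_of_pos_left hst ha]

lemma mul_add_lt_two_mul_mul_add_mul (ha : 0 ≤ a) (hs : 0 ≤ s) (ht : 0 < t) (hab : a < b) :
    t * (a + b) < 2 * (a * s + b * t) := by
  nlinarith [mul_lt_mul_of_pos_left hab ht, mul_nonneg ha hs]

end CrossSum

/-- The collective quantum advantage ratio `γ_col^{TMSV}/γ_col^{CI}` is strictly between
1 and 4. -/
theorem stmt_18 (N_S N_B : ℝ) (hNS : 0 < N_S) (hNB : 0 < N_B) :
    1 < (1 + N_S) * (Real.sqrt N_B + Real.sqrt (1 + N_B)) ^ 2 /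
          (Real.sqrt (N_B * N_S) + Real.sqrt ((1 + N_B) * (1 + N_S))) ^ 2 ∧
      (1 + N_S) * (Real.sqrt N_B + Real.sqrt (1 + N_B)) ^ 2 /
          (Real.sqrt (N_B * N_S) + Real.sqrt ((1 + N_B) * (1 + N_S))) ^ 2 < 4 := by
  have h_den : √(N_B * N_S) + √((1 + N_B) * (1 + N_S)) =
      √N_B * √N_S + √(1 + N_B) * √(1 + N_S) := by
    rw [Real.sqrt_mul hNB.le, Real.sqrt_mul (by positivity)]
  have h_num : (1 + N_S) * (√N_B + √(1 + N_B)) ^ 2 = (√(1 + N_S) * (√N_B + √(1 + N_B))) ^ 2 := by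
    rw [mul_pow, Real.sq_sqrt (by positivity)]
  have h_B : √N_B < √(1 + N_B) := Real.sqrt_lt_sqrt hNB.le (lt_one_add N_B)
  have h_S : √N_S < √(1 + N_S) := Real.sqrt_lt_sqrt hNS.le (lt_one_add N_S)
  rw [h_den, h_num]
  exact sq_div_sq_mem_Ioo_one_four (by positivity) (mul_add_mul_lt_mul_add (by positivity) h_S)
    (mul_add_lt_two_mul_mul_add_mul (by positivity) (by positivity) (by positivity) h_B)
end
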